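/- arXiv:2408.13276 — 3 statements merged into one kernel-verified Lean document; each statement's English description precedes it below -/
import Mathlib

section
/- Let A: S^d → R^m be a linear operator on symmetric d×d matrices with restricted isometry constant δ_{r+r'}, meaning (1−δ_{r+r'})‖Z‖_F² ≤ ‖A(Z)‖_2² ≤ (1+δ_{r+r'})‖Z‖_F² for all symmetric Z of rank at most r+r'. Then for all symmetric matrices Z₁ of rank at most r and Z₂ of rank at most r', one has |⟨(I − A*A)(Z₁), Z₂⟩| ≤ δ_{r+r'} ‖Z₁‖_F ‖Z₂‖_F, where A* is the adjoint of A with respect to the trace inner product. -/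
open scoped BigOperators
open Matrix

noncomputable def frobNorm {d₁ d₂ : ℕ} (A : Matrix (Fin d₁) (Fin d₂) ℝ) : ℝ :=
  Real.sqrt (∑ i, ∑ j, A i j ^ 2)

noncomputable def vecNorm {m : ℕ} (y : Fin m → ℝ) : ℝ :=
  Real.sqrt (∑ i, y i ^ 2)

noncomputable def specNorm {d₁ d₂ : ℕ} (A : Matrix (Fin d₁) (Fin d₂) ℝ) : ℝ :=
  ‖LinearMap.toContinuousLinearMap (Matrix.toEuclideanLin A)‖

noncomputable def tinner {d : ℕ} (A B : Matrix (Fin d) (Fin d) ℝ) : ℝ :=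
  (A * Bᵀ).trace

noncomputable def sigmaMin {d₁ d₂ : ℕ} (A : Matrix (Fin d₁) (Fin d₂) ℝ) : ℝ :=
  sInf {s : ℝ | 0 < s ∧ ∃ i, s ^ 2 = (Matrix.isHermitian_conjTranspose_mul_self A).eigenvalues i}

noncomputable def projPerp {d : ℕ} (w : Fin d → ℝ) (Z : Matrix (Fin d) (Fin d) ℝ) :
    Matrix (Fin d) (Fin d) ℝ :=
  Z - tinner (Matrix.vecMulVec w w) Z • Matrix.vecMulVec w w

/-!
By polarization, `⟨Z₁, Z₂⟩ - ⟨𝒜 Z₁, 𝒜 Z₂⟩` is a quarter of the difference of the defects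
`‖Z‖² - ‖𝒜 Z‖²` at `Z = Z₁ ± Z₂`. Both have rank at most `r + r'`, so the restricted isometry
bounds give `(δ / 2) (‖Z₁‖² + ‖Z₂‖²)`; normalising `Z₁` and `Z₂` to unit length turns this into
`δ ‖Z₁‖ ‖Z₂‖`. The adjoint identity rewrites `⟨𝒜* 𝒜 Z₁, Z₂⟩` as `⟨𝒜 Z₁, 𝒜 Z₂⟩`.
-/

open scoped RealInnerProductSpace

section RestrictedIsometry

variable {E F : Type*} [NormedAddCommGroup E] [InnerProductSpace ℝ E]
  [NormedAddCommGroup F] [InnerProductSpace ℝ F]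

def RestrictedIsometryOn (T : E →ₗ[ℝ] F) (δ : ℝ) (S : Set E) : Prop :=
  ∀ x ∈ S, (1 - δ) * ‖x‖ ^ 2 ≤ ‖T x‖ ^ 2 ∧ ‖T x‖ ^ 2 ≤ (1 + δ) * ‖x‖ ^ 2

namespace RestrictedIsometryOn

variable {T : E →ₗ[ℝ] F} {δ : ℝ} {S : Set E} {x y : E}

lemma abs_norm_sq_sub_le (h : RestrictedIsometryOn T δ S) (hx : x ∈ S) :
    |‖T x‖ ^ 2 - ‖x‖ ^ 2| ≤ δ * ‖x‖ ^ 2 := by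
  obtain ⟨hlow, hup⟩ := h x hx
  rw [abs_sub_le_iff]
  constructor <;> linarith

lemma abs_inner_sub_le (h : RestrictedIsometryOn T δ S) (hadd : x + y ∈ S) (hsub : x - y ∈ S) :
    |⟪T x, T y⟫ - ⟪x, y⟫| ≤ δ / 2 * (‖x‖ ^ 2 + ‖y‖ ^ 2) := by
  have hpol : 4 * (⟪T x, T y⟫ - ⟪x, y⟫) =
      (‖T (x + y)‖ ^ 2 - ‖x + y‖ ^ 2) - (‖T (x - y)‖ ^ 2 - ‖x - y‖ ^ 2) := by
    rw [map_add, map_sub, norm_add_sq_real, norm_sub_sq_real, norm_add_sq_real,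
      norm_sub_sq_real]
    ring
  have hpar : ‖x + y‖ ^ 2 + ‖x - y‖ ^ 2 = 2 * (‖x‖ ^ 2 + ‖y‖ ^ 2) := by
    rw [norm_add_sq_real, norm_sub_sq_real]
    ring
  have hdefect := (abs_sub _ _).trans
    (add_le_add (h.abs_norm_sq_sub_le hadd) (h.abs_norm_sq_sub_le hsub))
  rw [← hpol, abs_mul, abs_of_pos four_pos, ← mul_add, hpar] at hdefect
  linarith

lemma abs_inner_sub_le_mul (h : RestrictedIsometryOn T δ S)
    (hS : ∀ a b : ℝ, a • x + b • y ∈ S) :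
    |⟪T x, T y⟫ - ⟪x, y⟫| ≤ δ * ‖x‖ * ‖y‖ := by
  rcases eq_or_ne x 0 with rfl | hx
  · simp
  rcases eq_or_ne y 0 with rfl | hy
  · simp
  set u := ‖x‖⁻¹ • x
  set v := ‖y‖⁻¹ • y
  have hu : ‖u‖ = 1 := norm_smul_inv_norm hx
  have hv : ‖v‖ = 1 := norm_smul_inv_norm hy
  have huv := h.abs_inner_sub_le (x := u) (y := v) (hS _ _) (by
    simpa only [neg_smul, ← sub_eq_add_neg] using hS ‖x‖⁻¹ (-‖y‖⁻¹))
  have hscale : ⟪T u, T v⟫ - ⟪u, v⟫ = (‖x‖ * ‖y‖)⁻¹ * (⟪T x, T y⟫ - ⟪x, y⟫) := by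
    simp only [u, v, map_smul, real_inner_smul_left, real_inner_smul_right]
    ring
  have hpos : 0 < ‖x‖ * ‖y‖ := by positivity
  rw [hscale, hu, hv, abs_mul, abs_of_pos (inv_pos.2 hpos), inv_mul_le_iff₀ hpos] at huv
  linarith

end RestrictedIsometryOn

end RestrictedIsometry

lemma Matrix.rank_add_le {K m n : Type*} [Field K] [Fintype m] [Fintype n]
    (A B : Matrix m n K) : (A + B).rank ≤ A.rank + B.rank := by
  have hrange : LinearMap.range (A + B).mulVecLin ≤
      LinearMap.range A.mulVecLin ⊔ LinearMap.range B.mulVecLin := by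
    rintro _ ⟨v, rfl⟩
    exact Submodule.mem_sup.2 ⟨A *ᵥ v, ⟨v, rfl⟩, B *ᵥ v, ⟨v, rfl⟩, (Matrix.add_mulVec A B v).symm⟩
  exact (Submodule.finrank_mono hrange).trans (Submodule.finrank_add_le_finrank_add_finrank _ _)

lemma Matrix.rank_smul_le {K m n : Type*} [Field K] [Fintype m] [Fintype n]
    (c : K) (A : Matrix m n K) : (c • A).rank ≤ A.rank := by
  refine Submodule.finrank_mono ?_
  rintro _ ⟨v, rfl⟩
  exact ⟨c • v, by simp⟩

lemma tinner_eq_sum {d : ℕ} (A B : Matrix (Fin d) (Fin d) ℝ) :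
    tinner A B = ∑ i, ∑ j, A i j * B i j := by
  simp [tinner, Matrix.trace, Matrix.mul_apply]

lemma tinner_sub_left {d : ℕ} (A B C : Matrix (Fin d) (Fin d) ℝ) :
    tinner (A - B) C = tinner A C - tinner B C := by
  simp only [tinner, Matrix.sub_mul, Matrix.trace_sub]

def frobeniusToEuclidean (m n : Type*) : Matrix m n ℝ ≃ₗ[ℝ] EuclideanSpace ℝ (m × n) :=
  (LinearEquiv.curry ℝ ℝ m n).symm ≪≫ₗ (WithLp.linearEquiv 2 ℝ (m × n → ℝ)).symm

@[simp]
lemma frobeniusToEuclidean_apply {m n : Type*} (A : Matrix m n ℝ) (p : m × n) :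
    frobeniusToEuclidean m n A p = A p.1 p.2 :=
  rfl

lemma norm_frobeniusToEuclidean {d₁ d₂ : ℕ} (A : Matrix (Fin d₁) (Fin d₂) ℝ) :
    ‖frobeniusToEuclidean _ _ A‖ = frobNorm A := by
  simp [frobNorm, EuclideanSpace.norm_eq, Fintype.sum_prod_type]

lemma inner_frobeniusToEuclidean {d : ℕ} (A B : Matrix (Fin d) (Fin d) ℝ) :
    ⟪frobeniusToEuclidean _ _ A, frobeniusToEuclidean _ _ B⟫ = tinner A B := by
  simp [tinner_eq_sum, PiLp.inner_apply, Fintype.sum_prod_type, mul_comm]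

theorem statement0_general {d m r r' : ℕ} (δ : ℝ)
    (𝒜 : Matrix (Fin d) (Fin d) ℝ →ₗ[ℝ] (Fin m → ℝ))
    (𝒜s : (Fin m → ℝ) →ₗ[ℝ] Matrix (Fin d) (Fin d) ℝ)
    (hadj : ∀ (y : Fin m → ℝ) (Z : Matrix (Fin d) (Fin d) ℝ), Z.IsSymm →
      tinner (𝒜s y) Z = ∑ i, y i * 𝒜 Z i)
    (hRIP : ∀ Z : Matrix (Fin d) (Fin d) ℝ, Z.IsSymm → Z.rank ≤ r + r' →
      (1 - δ) * frobNorm Z ^ 2 ≤ ∑ i, 𝒜 Z i ^ 2 ∧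
        ∑ i, 𝒜 Z i ^ 2 ≤ (1 + δ) * frobNorm Z ^ 2)
    (Z₁ Z₂ : Matrix (Fin d) (Fin d) ℝ)
    (hZ₁ : Z₁.IsSymm) (hr₁ : Z₁.rank ≤ r)
    (hZ₂ : Z₂.IsSymm) (hr₂ : Z₂.rank ≤ r') :
    |tinner (Z₁ - 𝒜s (𝒜 Z₁)) Z₂| ≤ δ * frobNorm Z₁ * frobNorm Z₂ := by
  set e := frobeniusToEuclidean (Fin d) (Fin d)
  let T : EuclideanSpace ℝ (Fin d × Fin d) →ₗ[ℝ] EuclideanSpace ℝ (Fin m) :=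
    (WithLp.linearEquiv 2 ℝ (Fin m → ℝ)).symm.toLinearMap ∘ₗ 𝒜 ∘ₗ e.symm.toLinearMap
  have hT : RestrictedIsometryOn T δ (e.symm ⁻¹' {Z | Z.IsSymm ∧ Z.rank ≤ r + r'}) := by
    intro x ⟨hsymm, hrank⟩
    have hnorm : ‖x‖ = frobNorm (e.symm x) := by
      rw [← norm_frobeniusToEuclidean, LinearEquiv.apply_symm_apply]
    simpa [T, hnorm, EuclideanSpace.real_norm_sq_eq] using hRIP _ hsymm hrank
  have hmem : ∀ a b : ℝ, a • e Z₁ + b • e Z₂ ∈ e.symm ⁻¹' {Z | Z.IsSymm ∧ Z.rank ≤ r + r'} := by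
    intro a b
    have hsum : e.symm (a • e Z₁ + b • e Z₂) = a • Z₁ + b • Z₂ := by simp
    rw [Set.mem_preimage, hsum]
    exact ⟨(hZ₁.smul a).add (hZ₂.smul b), (Matrix.rank_add_le _ _).trans
      (add_le_add ((Matrix.rank_smul_le a Z₁).trans hr₁) ((Matrix.rank_smul_le b Z₂).trans hr₂))⟩
  have key := hT.abs_inner_sub_le_mul hmem
  have hinner : ⟪T (e Z₁), T (e Z₂)⟫ = ∑ i, 𝒜 Z₁ i * 𝒜 Z₂ i := by
    simp [T, PiLp.inner_apply, mul_comm]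
  rw [hinner, inner_frobeniusToEuclidean, norm_frobeniusToEuclidean,
    norm_frobeniusToEuclidean] at key
  rw [tinner_sub_left, hadj _ _ hZ₂, abs_sub_comm]
  exact key

theorem statement0 {d m r r' : ℕ} (δ : ℝ) (hδ : 0 ≤ δ)
    (𝒜 : Matrix (Fin d) (Fin d) ℝ →ₗ[ℝ] (Fin m → ℝ))
    (𝒜s : (Fin m → ℝ) →ₗ[ℝ] Matrix (Fin d) (Fin d) ℝ)
    (hsym : ∀ y, (𝒜s y).IsSymm)
    (hadj : ∀ (y : Fin m → ℝ) (Z : Matrix (Fin d) (Fin d) ℝ), Z.IsSymm →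
      tinner (𝒜s y) Z = ∑ i, y i * 𝒜 Z i)
    (hRIP : ∀ Z : Matrix (Fin d) (Fin d) ℝ, Z.IsSymm → Z.rank ≤ r + r' →
      (1 - δ) * frobNorm Z ^ 2 ≤ ∑ i, 𝒜 Z i ^ 2 ∧
        ∑ i, 𝒜 Z i ^ 2 ≤ (1 + δ) * frobNorm Z ^ 2)
    (Z₁ Z₂ : Matrix (Fin d) (Fin d) ℝ)
    (hZ₁ : Z₁.IsSymm) (hr₁ : Z₁.rank ≤ r)
    (hZ₂ : Z₂.IsSymm) (hr₂ : Z₂.rank ≤ r') :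
    |tinner (Z₁ - 𝒜s (𝒜 Z₁)) Z₂| ≤ δ * frobNorm Z₁ * frobNorm Z₂ :=
  statement0_general δ 𝒜 𝒜s hadj hRIP Z₁ Z₂ hZ₁ hr₁ hZ₂ hr₂
end

section
/- Let X_⋆ be a symmetric PSD d×d matrix of rank r with top eigenvector matrix V_⋆ ∈ R^{d×r} and complement V_⊥, and let U, W ∈ R^{d×r} and μ > 0. Suppose ‖V_⊥^T V_U‖ ≤ c₁, ‖U‖ ≤ √(2‖X_⋆‖), ‖UU^T − X_⋆‖ ≤ c₂ σ_min(X_⋆), ‖UU^T − WW^T‖_F ≤ c₃ σ_min(X_⋆), and μ ≤ c₄/(κ‖X_⋆‖) for sufficiently small absolute constants c₁,…,c₄, where κ = ‖X_⋆‖/σ_min(X_⋆). Then: (i) all eigenvalues of Id + μ(X_⋆ − UU^T − WW^T) are nonnegative; (ii) λ_max(V_⋆^T (X_⋆ − UU^T − WW^T) V_⋆) ≤ −σ_min(X_⋆)/2; and (iii) ‖Id + μ(X_⋆ − UU^T − WW^T)‖ ≤ 1 + μσ_min(X_⋆)/128. -/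
open scoped BigOperators
open Matrix

/-!
On the range of `X⋆` its quadratic form is at least `σ_min(X⋆)` times the squared norm (expand in
an eigenbasis: the coordinates of `X⋆ z` along the kernel vanish), and `V⋆` maps into that range
since `rank X⋆ = r`. Writing `P = UUᵀ`, `Q = WWᵀ` and `ε = σ_min/256`, the two perturbation
bounds give `|xᵀ(P - X⋆)x| ≤ ε‖x‖²` and `|xᵀ(P - Q)x| ≤ ε‖x‖²` (the Frobenius norm dominates the
spectral norm). Hence the quadratic form of `M = X⋆ - P - Q` lies between `-(‖X⋆‖ + 3ε)‖x‖²` and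
`2ε‖x‖²`, and is at most `-(σ_min - 3ε)‖x‖²` on the range of `V⋆`. The step-size condition makes
`μ(‖X⋆‖ + 3ε) ≤ 1`, so `1 + μM` is positive semidefinite, and its spectral norm is then its largest
Rayleigh quotient, at most `1 + 2με`.
-/

open scoped Matrix.Norms.L2Operator RealInnerProductSpace

namespace Matrix

section Euclidean

variable {n : Type*} [Fintype n]

lemma dotProduct_self_eq_inner (x : n → ℝ) : x ⬝ᵥ x = ⟪WithLp.toLp 2 x, WithLp.toLp 2 x⟫ := by
  rw [EuclideanSpace.inner_eq_star_dotProduct]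
  simp

lemma dotProduct_self_eq_norm_sq (x : n → ℝ) : x ⬝ᵥ x = ‖WithLp.toLp 2 x‖ ^ 2 := by
  rw [dotProduct_self_eq_inner, real_inner_self_eq_norm_sq]

variable [DecidableEq n]

lemma dotProduct_mulVec_eq_inner (A : Matrix n n ℝ) (x : n → ℝ) :
    x ⬝ᵥ A *ᵥ x = ⟪WithLp.toLp 2 x, toEuclideanCLM (𝕜 := ℝ) A (WithLp.toLp 2 x)⟫ := by
  rw [inner_toEuclideanCLM]

lemma IsHermitian.inner_eigenvectorBasis_toEuclideanCLM {A : Matrix n n ℝ} (hA : A.IsHermitian)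
    (i : n) (v : EuclideanSpace ℝ n) :
    ⟪hA.eigenvectorBasis i, toEuclideanCLM (𝕜 := ℝ) A v⟫ =
      hA.eigenvalues i * ⟪hA.eigenvectorBasis i, v⟫ := by
  have hT : (toEuclideanCLM (n := n) (𝕜 := ℝ) A : EuclideanSpace ℝ n →ₗ[ℝ] _).IsSymmetric :=
    isSymmetric_toEuclideanLin_iff.mpr hA
  have hb : toEuclideanCLM (𝕜 := ℝ) A (hA.eigenvectorBasis i) =
      hA.eigenvalues i • hA.eigenvectorBasis i := by
    ext1
    simp [hA.mulVec_eigenvectorBasis]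
  rw [← ContinuousLinearMap.coe_coe, ← hT, ContinuousLinearMap.coe_coe, hb, real_inner_smul_left]

lemma IsHermitian.mul_dotProduct_self_le_of_eq_mulVec {A : Matrix n n ℝ} (hA : A.IsHermitian)
    {c : ℝ} (hc : ∀ i, hA.eigenvalues i ≠ 0 → c ≤ hA.eigenvalues i) {y : n → ℝ}
    (hy : ∃ z, A *ᵥ z = y) : c * (y ⬝ᵥ y) ≤ y ⬝ᵥ A *ᵥ y := by
  obtain ⟨z, rfl⟩ := hy
  set b := hA.eigenvectorBasis
  set T := toEuclideanCLM (n := n) (𝕜 := ℝ) A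
  set v := T (WithLp.toLp 2 z)
  have hcoeff (i : n) (w : EuclideanSpace ℝ n) : ⟪b i, T w⟫ = hA.eigenvalues i * ⟪b i, w⟫ :=
    hA.inner_eigenvectorBasis_toEuclideanCLM i w
  have hnorm : ⟪v, v⟫ = ∑ i, ⟪b i, v⟫ ^ 2 := by
    rw [← b.sum_inner_mul_inner v v]
    simp [real_inner_comm, sq]
  have hquad : ⟪v, T v⟫ = ∑ i, hA.eigenvalues i * ⟪b i, v⟫ ^ 2 := by
    rw [← b.sum_inner_mul_inner v (T v)]
    refine Finset.sum_congr rfl fun i _ => ?_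
    rw [hcoeff, real_inner_comm v]
    ring
  rw [dotProduct_self_eq_inner, ← inner_toEuclideanCLM]
  change c * ⟪v, v⟫ ≤ ⟪v, T v⟫
  rw [hnorm, hquad, Finset.mul_sum]
  refine Finset.sum_le_sum fun i _ => ?_
  rcases eq_or_ne (hA.eigenvalues i) 0 with h0 | h0
  · simp [v, hcoeff, h0]
  · exact mul_le_mul_of_nonneg_right (hc i h0) (sq_nonneg _)

lemma dotProduct_one_add_smul_mulVec (M : Matrix n n ℝ) (μ : ℝ) (x : n → ℝ) :
    x ⬝ᵥ (1 + μ • M) *ᵥ x = x ⬝ᵥ x + μ * (x ⬝ᵥ M *ᵥ x) := by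
  rw [add_mulVec, one_mulVec, smul_mulVec, dotProduct_add, dotProduct_smul, smul_eq_mul]

lemma posSemidef_one_add_smul {M : Matrix n n ℝ} (hM : M.IsHermitian) {μ a : ℝ} (hμ : 0 ≤ μ)
    (hμa : μ * a ≤ 1) (hlow : ∀ x, -a * (x ⬝ᵥ x) ≤ x ⬝ᵥ M *ᵥ x) : (1 + μ • M).PosSemidef := by
  refine .of_dotProduct_mulVec_nonneg (isHermitian_one.add (hM.smul (.all μ))) fun x => ?_
  rw [star_trivial, dotProduct_one_add_smul_mulVec]
  have hx : 0 ≤ x ⬝ᵥ x := by simpa using dotProduct_self_star_nonneg x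
  linarith [mul_le_mul_of_nonneg_left (hlow x) hμ, mul_nonneg (sub_nonneg.mpr hμa) hx]

end Euclidean

lemma dotProduct_transpose_mul_mul_mulVec {m k R : Type*} [Fintype m] [Fintype k]
    [CommSemiring R] (V : Matrix m k R) (M : Matrix m m R) (x : k → R) :
    x ⬝ᵥ (Vᵀ * M * V) *ᵥ x = (V *ᵥ x) ⬝ᵥ M *ᵥ (V *ᵥ x) := by
  rw [← mulVec_mulVec, ← mulVec_mulVec, dotProduct_mulVec, vecMul_transpose]

lemma exists_mulVec_eq_mulVec_of_mul_eq_of_rank_eq {m n k K : Type*} [Fintype n] [Fintype k]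
    [Field K] {A : Matrix m n K} {B : Matrix m k K} {C : Matrix k n K} (h : B * C = A)
    (hA : A.rank = Fintype.card k) (x : k → K) : ∃ z, A *ᵥ z = B *ᵥ x := by
  have hrange : LinearMap.range A.mulVecLin = LinearMap.range B.mulVecLin := by
    refine Submodule.eq_of_le_of_finrank_le ?_ ?_
    · rw [← h, mulVecLin_mul]
      exact LinearMap.range_comp_le_range _ _
    · calc Module.finrank K (LinearMap.range B.mulVecLin) ≤ Fintype.card k := by
            simpa using LinearMap.finrank_range_le B.mulVecLin
        _ = Module.finrank K (LinearMap.range A.mulVecLin) := hA.symm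
  have hx : B.mulVecLin x ∈ LinearMap.range A.mulVecLin := hrange ▸ LinearMap.mem_range_self _ x
  exact hx

end Matrix

section SpecNorm

variable {d : ℕ}

lemma specNorm_nonneg {d₁ d₂ : ℕ} (A : Matrix (Fin d₁) (Fin d₂) ℝ) : 0 ≤ specNorm A :=
  norm_nonneg _

lemma specNorm_le_frobNorm {d₁ d₂ : ℕ} (A : Matrix (Fin d₁) (Fin d₂) ℝ) :
    specNorm A ≤ frobNorm A := by
  refine ContinuousLinearMap.opNorm_le_bound _ (Real.sqrt_nonneg _) fun x => ?_
  rw [frobNorm, EuclideanSpace.norm_eq, EuclideanSpace.norm_eq, ← Real.sqrt_mul (by positivity)]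
  gcongr
  calc ∑ i, ‖(A *ᵥ x.ofLp) i‖ ^ 2 ≤ ∑ i, (∑ j, A i j ^ 2) * ∑ j, ‖x j‖ ^ 2 := by
        gcongr with i
        simpa [mulVec, dotProduct] using Finset.sum_mul_sq_le_sq_mul_sq Finset.univ (A i) x.ofLp
    _ = (∑ i, ∑ j, A i j ^ 2) * ∑ j, ‖x j‖ ^ 2 := (Finset.sum_mul ..).symm

lemma abs_dotProduct_mulVec_le_of_specNorm_le {A : Matrix (Fin d) (Fin d) ℝ} {C : ℝ}
    (hA : specNorm A ≤ C) (x : Fin d → ℝ) : |x ⬝ᵥ A *ᵥ x| ≤ C * (x ⬝ᵥ x) := by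
  set T := toEuclideanCLM (n := Fin d) (𝕜 := ℝ) A
  set v := WithLp.toLp 2 x
  have hT : ‖T‖ ≤ C := hA
  calc |x ⬝ᵥ A *ᵥ x| = |⟪v, T v⟫| := by rw [dotProduct_mulVec_eq_inner]
    _ ≤ ‖v‖ * ‖T v‖ := abs_real_inner_le_norm _ _
    _ ≤ ‖v‖ * (C * ‖v‖) := by gcongr; exact T.le_of_opNorm_le hT v
    _ = C * (x ⬝ᵥ x) := by rw [dotProduct_self_eq_norm_sq]; ring

lemma specNorm_le_of_abs_dotProduct_mulVec_le {A : Matrix (Fin d) (Fin d) ℝ} (hA : A.IsHermitian)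
    {C : ℝ} (hC : 0 ≤ C) (h : ∀ x, |x ⬝ᵥ A *ᵥ x| ≤ C * (x ⬝ᵥ x)) : specNorm A ≤ C := by
  set T := toEuclideanCLM (n := Fin d) (𝕜 := ℝ) A
  have hT : (T : EuclideanSpace ℝ (Fin d) →ₗ[ℝ] _).IsSymmetric :=
    isSymmetric_toEuclideanLin_iff.mpr hA
  change ‖T‖ ≤ C
  rw [T.norm_eq_iSup_rayleighQuotient hT]
  refine ciSup_le fun v => ?_
  rcases eq_or_ne v 0 with rfl | hv
  · simpa using hC
  have hv : 0 < ‖v‖ ^ 2 := by positivity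
  have hx := h v.ofLp
  rw [dotProduct_mulVec_eq_inner, dotProduct_self_eq_norm_sq] at hx
  simp only [ContinuousLinearMap.reApplyInnerSelf_apply, abs_div, abs_of_pos hv, div_le_iff₀ hv]
  simpa [real_inner_comm] using hx

lemma Matrix.IsHermitian.eigenvalues_le_specNorm {A : Matrix (Fin d) (Fin d) ℝ}
    (hA : A.IsHermitian) (i : Fin d) : hA.eigenvalues i ≤ specNorm A := by
  set b := hA.eigenvectorBasis i
  have hb : b.ofLp ⬝ᵥ b.ofLp = 1 := by
    rw [dotProduct_self_eq_norm_sq, WithLp.toLp_ofLp, hA.eigenvectorBasis.norm_eq_one, one_pow]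
  calc hA.eigenvalues i = b.ofLp ⬝ᵥ A *ᵥ b.ofLp := by simp [b, hA.eigenvalues_eq]
    _ ≤ |b.ofLp ⬝ᵥ A *ᵥ b.ofLp| := le_abs_self _
    _ ≤ specNorm A := by simpa [hb] using abs_dotProduct_mulVec_le_of_specNorm_le le_rfl b.ofLp

lemma specNorm_one_add_smul_le {M : Matrix (Fin d) (Fin d) ℝ} (hM : M.IsHermitian) {μ a b : ℝ}
    (hμ : 0 ≤ μ) (hμa : μ * a ≤ 1) (hlow : ∀ x, -a * (x ⬝ᵥ x) ≤ x ⬝ᵥ M *ᵥ x) (hb : 0 ≤ b)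
    (hup : ∀ x, x ⬝ᵥ M *ᵥ x ≤ b * (x ⬝ᵥ x)) : specNorm (1 + μ • M) ≤ 1 + μ * b := by
  have hPSD := posSemidef_one_add_smul hM hμ hμa hlow
  refine specNorm_le_of_abs_dotProduct_mulVec_le hPSD.1 (by positivity) fun x => ?_
  have hnonneg : 0 ≤ x ⬝ᵥ (1 + μ • M) *ᵥ x := by simpa using hPSD.dotProduct_mulVec_nonneg x
  rw [abs_of_nonneg hnonneg, dotProduct_one_add_smul_mulVec]
  linarith [mul_le_mul_of_nonneg_left (hup x) hμ]

end SpecNorm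

section SigmaMin

variable {d₁ d₂ : ℕ} {A : Matrix (Fin d₁) (Fin d₂) ℝ}

lemma sigmaMin_le {s : ℝ} (hs : 0 < s) {i : Fin d₂}
    (hi : s ^ 2 = (isHermitian_conjTranspose_mul_self A).eigenvalues i) : sigmaMin A ≤ s :=
  csInf_le ⟨0, fun _ ht => ht.1.le⟩ ⟨hs, i, hi⟩

lemma sigmaMin_pos (hA : A ≠ 0) : 0 < sigmaMin A := by
  set hB := isHermitian_conjTranspose_mul_self A
  have hfin : {s : ℝ | 0 < s ∧ ∃ i, s ^ 2 = hB.eigenvalues i}.Finite := by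
    refine (Set.finite_range fun i => √(hB.eigenvalues i)).subset ?_
    rintro s ⟨hs, i, hi⟩
    exact ⟨i, by simp only [← hi, Real.sqrt_sq hs.le]⟩
  have hne : {s : ℝ | 0 < s ∧ ∃ i, s ^ 2 = hB.eigenvalues i}.Nonempty := by
    obtain ⟨i, hi⟩ : ∃ i, hB.eigenvalues i ≠ 0 := by
      by_contra! h
      exact hA (conjTranspose_mul_self_eq_zero.mp (hB.eigenvalues_eq_zero_iff.mp (funext h)))
    have hpos : 0 < hB.eigenvalues i := (eigenvalues_conjTranspose_mul_self_nonneg A i).lt_of_ne' hi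
    exact ⟨√(hB.eigenvalues i), Real.sqrt_pos.mpr hpos, i, Real.sq_sqrt hpos.le⟩
  exact (hne.csInf_mem hfin).1

lemma sigmaMin_le_specNorm (A : Matrix (Fin d₁) (Fin d₂) ℝ) : sigmaMin A ≤ specNorm A := by
  set S := {s : ℝ | 0 < s ∧ ∃ i, s ^ 2 = (isHermitian_conjTranspose_mul_self A).eigenvalues i}
  rcases S.eq_empty_or_nonempty with hS | ⟨s, hs, i, hi⟩
  · change sInf S ≤ specNorm A
    rw [hS, Real.sInf_empty]
    exact specNorm_nonneg A
  have hAA : specNorm (Aᴴ * A) = specNorm A ^ 2 := by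
    rw [sq]
    exact l2_opNorm_conjTranspose_mul_self A
  refine (sigmaMin_le hs hi).trans ((sq_le_sq₀ hs.le (specNorm_nonneg A)).mp ?_)
  rw [hi, ← hAA]
  exact (isHermitian_conjTranspose_mul_self A).eigenvalues_le_specNorm i

lemma Matrix.PosSemidef.sigmaMin_mul_dotProduct_self_le {d : ℕ} {X : Matrix (Fin d) (Fin d) ℝ}
    (hX : X.PosSemidef) {y : Fin d → ℝ} (hy : ∃ z, X *ᵥ z = y) :
    sigmaMin X * (y ⬝ᵥ y) ≤ y ⬝ᵥ X *ᵥ y := by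
  refine hX.1.mul_dotProduct_self_le_of_eq_mulVec (fun i hi => ?_) hy
  have hsq : hX.1.eigenvalues i ^ 2 ∈ spectrum ℝ (Xᴴ * X) := by
    rw [hX.1.eq, ← sq]
    exact spectrum.pow_mem_pow X 2 (hX.1.eigenvalues_mem_spectrum_real i)
  rw [(isHermitian_conjTranspose_mul_self X).spectrum_real_eq_range_eigenvalues] at hsq
  obtain ⟨j, hj⟩ := hsq
  exact sigmaMin_le ((hX.eigenvalues_nonneg i).lt_of_ne' hi) hj.symm

end SigmaMin

section Perturbation

variable {d : ℕ} {X P Q : Matrix (Fin d) (Fin d) ℝ} {ε : ℝ}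

lemma neg_mul_le_dotProduct_sub_sub_mulVec (hPX : specNorm (P - X) ≤ ε)
    (hPQ : specNorm (P - Q) ≤ ε) (x : Fin d → ℝ) :
    -(specNorm X + 3 * ε) * (x ⬝ᵥ x) ≤ x ⬝ᵥ (X - P - Q) *ᵥ x := by
  have hX := abs_le.mp (abs_dotProduct_mulVec_le_of_specNorm_le (A := X) le_rfl x)
  have hP := abs_le.mp (abs_dotProduct_mulVec_le_of_specNorm_le hPX x)
  have hQ := abs_le.mp (abs_dotProduct_mulVec_le_of_specNorm_le hPQ x)
  simp only [sub_mulVec, dotProduct_sub] at hP hQ ⊢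
  linarith [hX.2, hP.2, hQ.1]

lemma dotProduct_sub_sub_mulVec_le (hP : P.PosSemidef) (hPX : specNorm (P - X) ≤ ε)
    (hPQ : specNorm (P - Q) ≤ ε) (x : Fin d → ℝ) :
    x ⬝ᵥ (X - P - Q) *ᵥ x ≤ 2 * ε * (x ⬝ᵥ x) := by
  have hP₀ : 0 ≤ x ⬝ᵥ P *ᵥ x := by simpa using hP.dotProduct_mulVec_nonneg x
  have hPX' := abs_le.mp (abs_dotProduct_mulVec_le_of_specNorm_le hPX x)
  have hPQ' := abs_le.mp (abs_dotProduct_mulVec_le_of_specNorm_le hPQ x)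
  simp only [sub_mulVec, dotProduct_sub] at hPX' hPQ' ⊢
  linarith [hPX'.1, hPQ'.2]

lemma dotProduct_sub_sub_mulVec_le_neg (hPX : specNorm (P - X) ≤ ε)
    (hPQ : specNorm (P - Q) ≤ ε) (x : Fin d → ℝ) :
    x ⬝ᵥ (X - P - Q) *ᵥ x ≤ -(x ⬝ᵥ X *ᵥ x) + 3 * ε * (x ⬝ᵥ x) := by
  have hPX' := abs_le.mp (abs_dotProduct_mulVec_le_of_specNorm_le hPX x)
  have hPQ' := abs_le.mp (abs_dotProduct_mulVec_le_of_specNorm_le hPQ x)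
  simp only [sub_mulVec, dotProduct_sub] at hPX' hPQ' ⊢
  linarith [hPX'.1, hPQ'.2]

lemma dotProduct_transpose_mul_sub_sub_mul_mulVec_le {r : ℕ} {V : Matrix (Fin d) (Fin r) ℝ}
    (hX : X.PosSemidef) (hrank : X.rank = r) (hV : Vᵀ * V = 1) (hVX : V * Vᵀ * X = X)
    (hPX : specNorm (P - X) ≤ ε) (hPQ : specNorm (P - Q) ≤ ε) (x : Fin r → ℝ) :
    x ⬝ᵥ (Vᵀ * (X - P - Q) * V) *ᵥ x ≤ -(sigmaMin X - 3 * ε) * (x ⬝ᵥ x) := by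
  have hVx : x ⬝ᵥ x = (V *ᵥ x) ⬝ᵥ (V *ᵥ x) := by
    simpa [hV] using dotProduct_transpose_mul_mul_mulVec V 1 x
  have hσ : sigmaMin X * ((V *ᵥ x) ⬝ᵥ (V *ᵥ x)) ≤ (V *ᵥ x) ⬝ᵥ X *ᵥ (V *ᵥ x) :=
    hX.sigmaMin_mul_dotProduct_self_le (exists_mulVec_eq_mulVec_of_mul_eq_of_rank_eq
      (C := Vᵀ * X) (by rw [← Matrix.mul_assoc, hVX]) (by simpa using hrank) x)
  rw [dotProduct_transpose_mul_mul_mulVec, hVx]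
  linarith [dotProduct_sub_sub_mulVec_le_neg hPX hPQ (V *ᵥ x)]

end Perturbation

lemma mul_le_of_le_div_div_mul {μ c σ N : ℝ} (hc : 0 ≤ c) (hσ : 0 < σ) (hσN : σ ≤ N)
    (hμ : μ ≤ c / (N / σ * N)) : μ * N ≤ c := by
  have hN : 0 < N := hσ.trans_le hσN
  have hden : N ≤ N / σ * N := le_mul_of_one_le_left hN.le ((one_le_div hσ).mpr hσN)
  exact (le_div_iff₀ hN).mp (hμ.trans (div_le_div_of_nonneg_left hc hN hden))

theorem statement8 :
    ∃ c₁ c₂ c₃ c₄ : ℝ, 0 < c₁ ∧ 0 < c₂ ∧ 0 < c₃ ∧ 0 < c₄ ∧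
      ∀ (d r : ℕ), r ≤ d →
      ∀ (Xs : Matrix (Fin d) (Fin d) ℝ), Xs.PosSemidef → Xs.rank = r →
      ∀ (Vs VU U W : Matrix (Fin d) (Fin r) ℝ) (Vp : Matrix (Fin d) (Fin (d - r)) ℝ)
        (μ : ℝ),
        Vsᵀ * Vs = 1 → Vs * Vsᵀ * Xs = Xs → Vpᵀ * Vp = 1 → Vsᵀ * Vp = 0 →
        VUᵀ * VU = 1 → VU * VUᵀ * U = U →
        specNorm (Vpᵀ * VU) ≤ c₁ →
        specNorm U ≤ Real.sqrt (2 * specNorm Xs) →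
        specNorm (U * Uᵀ - Xs) ≤ c₂ * sigmaMin Xs →
        frobNorm (U * Uᵀ - W * Wᵀ) ≤ c₃ * sigmaMin Xs →
        0 < μ → μ ≤ c₄ / (specNorm Xs / sigmaMin Xs * specNorm Xs) →
        Matrix.PosSemidef (1 + μ • (Xs - U * Uᵀ - W * Wᵀ)) ∧
          (∀ x : Fin r → ℝ,
            ∑ j, x j * (Vsᵀ * (Xs - U * Uᵀ - W * Wᵀ) * Vs).mulVec x j
              ≤ -(sigmaMin Xs / 2) * ∑ j, x j ^ 2) ∧
          specNorm (1 + μ • (Xs - U * Uᵀ - W * Wᵀ)) ≤ 1 + μ * sigmaMin Xs / 128 := by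
  refine ⟨1, 1 / 256, 1 / 256, 1 / 2, by norm_num, by norm_num, by norm_num, by norm_num, ?_⟩
  intro d r _ Xs hX hrank Vs _ U W _ μ hVs hVsX _ _ _ _ _ _ hUX hUW hμ hμN
  set σ := sigmaMin Xs
  set N := specNorm Xs
  -- For `Xs = 0` the step-size bound reads `μ ≤ 1 / 2 / 0 = 0`.
  have hXs : Xs ≠ 0 := by
    rintro rfl
    simp only [N, specNorm, map_zero, norm_zero, zero_div, zero_mul, div_zero] at hμN
    linarith
  have hσ : 0 < σ := sigmaMin_pos hXs
  have hσN : σ ≤ N := sigmaMin_le_specNorm Xs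
  have hμa : μ * (N + 3 * (1 / 256 * σ)) ≤ 1 := by
    linarith [mul_le_of_le_div_div_mul (by norm_num) hσ hσN hμN,
      mul_le_mul_of_nonneg_left hσN hμ.le]
  have hUU : (U * Uᵀ).PosSemidef := by simpa using posSemidef_self_mul_conjTranspose U
  have hWW : (W * Wᵀ).PosSemidef := by simpa using posSemidef_self_mul_conjTranspose W
  have hM : (Xs - U * Uᵀ - W * Wᵀ).IsHermitian := (hX.1.sub hUU.1).sub hWW.1
  have hUW' := (specNorm_le_frobNorm _).trans hUW
  have hlow := neg_mul_le_dotProduct_sub_sub_mulVec hUX hUW'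
  refine ⟨posSemidef_one_add_smul hM hμ.le hμa hlow, fun x => ?_,
    (specNorm_one_add_smul_le hM hμ.le hμa hlow (by positivity)
      (dotProduct_sub_sub_mulVec_le hUU hUX hUW')).trans_eq (by ring)⟩
  have hx : 0 ≤ x ⬝ᵥ x := by simpa using dotProduct_self_star_nonneg x
  change x ⬝ᵥ _ *ᵥ x ≤ _
  rw [show ∑ j, x j ^ 2 = x ⬝ᵥ x by simp [dotProduct, sq]]
  linarith [dotProduct_transpose_mul_sub_sub_mul_mulVec_le hX hrank hVs hVsX hUX hUW' x,
    mul_nonneg hσ.le hx]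
end

section
/- Let Z₁, Z₂ ∈ R^{d×d} be symmetric matrices whose eigenvalues are ordered by decreasing absolute value, with |λ_r(Z₁)| > |λ_{r+1}(Z₁)| for some 1 ≤ r < d. Let U_{1,r}, U_{2,r} be matrices whose columns are eigenvectors of Z₁, Z₂ corresponding to the r largest-magnitude eigenvalues, and U_{2,r,⊥} an orthonormal complement of U_{2,r}. If ‖Z₁ − Z₂‖ ≤ (1 − 1/√2)(|λ_r(Z₁)| − |λ_{r+1}(Z₁)|), then for |||·||| equal to the spectral or Frobenius norm: |||U_{2,r,⊥}^T U_{1,r}||| ≤ √2 · |||(Z₁ − Z₂) U_{1,r}||| / (|λ_r(Z₁)| − |λ_{r+1}(Z₁)|). -/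
open scoped BigOperators
open Matrix

/-- The matrix formed by the first `r` columns of a `d × d` matrix. -/
def firstCols {d : ℕ} (r : ℕ) (hrd : r ≤ d) (U : Matrix (Fin d) (Fin d) ℝ) :
    Matrix (Fin d) (Fin r) ℝ :=
  Matrix.of fun i j => U i ⟨j.1, lt_of_lt_of_le j.2 hrd⟩

/-- The matrix formed by the last `d - r` columns of a `d × d` matrix. -/
def lastCols {d : ℕ} (r : ℕ) (U : Matrix (Fin d) (Fin d) ℝ) :
    Matrix (Fin d) (Fin (d - r)) ℝ :=
  Matrix.of fun i j => U i ⟨r + j.1, by have h := j.2; omega⟩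

/-! A Courant–Fischer argument (a unit vector in the span of the top `r + 1` eigenvectors of `Z₂`
orthogonal to the top `r` eigenvectors of `Z₁`) gives the Weyl-type bound
`|λ_{r+1}(Z₂)| ≤ |λ_{r+1}(Z₁)| + ‖Z₁ - Z₂‖`, so the closeness hypothesis leaves the gap
`|λ_r(Z₁)| - |λ_{r+1}(Z₂)| ≥ (|λ_r(Z₁)| - |λ_{r+1}(Z₁)|) / √2`.
The matrix `X = U_{2,r,⊥}ᵀ U_{1,r}` solves the Sylvester equation
`X Λ_{1,r} - Λ_{2,r,⊥} X = U_{2,r,⊥}ᵀ (Z₁ - Z₂) U_{1,r}`, whose two diagonal coefficient matrices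
are separated by that gap; this bounds `gap · |||X|||` by the norm of the right-hand side, and
`U_{2,r,⊥}ᵀ` is a contraction. -/

open scoped Matrix.Norms.L2Operator

lemma specNorm_eq_l2_opNorm {m n : ℕ} (A : Matrix (Fin m) (Fin n) ℝ) : specNorm A = ‖A‖ := rfl

lemma vecNorm_eq_norm {m : ℕ} (x : Fin m → ℝ) : vecNorm x = ‖WithLp.toLp 2 x‖ := by
  simp [vecNorm, EuclideanSpace.norm_eq]

lemma vecNorm_mulVec_le {m n : ℕ} (A : Matrix (Fin m) (Fin n) ℝ) (x : Fin n → ℝ) :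
    vecNorm (A *ᵥ x) ≤ specNorm A * vecNorm x := by
  simpa [vecNorm_eq_norm, specNorm_eq_l2_opNorm] using A.l2_opNorm_mulVec (WithLp.toLp 2 x)

lemma vecNorm_sub_le {m : ℕ} (x y : Fin m → ℝ) : vecNorm (x - y) ≤ vecNorm x + vecNorm y := by
  simpa [vecNorm_eq_norm] using norm_sub_le (WithLp.toLp 2 x) (WithLp.toLp 2 y)

lemma vecNorm_smul {m : ℕ} (c : ℝ) (x : Fin m → ℝ) : vecNorm (c • x) = |c| * vecNorm x := by
  simp [vecNorm_eq_norm, norm_smul]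

lemma vecNorm_pos {m : ℕ} {x : Fin m → ℝ} (hx : x ≠ 0) : 0 < vecNorm x := by
  simpa [vecNorm_eq_norm] using hx

lemma vecNorm_le_of_abs_le {m : ℕ} {x y : Fin m → ℝ} (h : ∀ i, |x i| ≤ |y i|) :
    vecNorm x ≤ vecNorm y :=
  Real.sqrt_le_sqrt <| Finset.sum_le_sum fun i _ => sq_le_sq.mpr (h i)

lemma frobNorm_le_of_abs_le {m n : ℕ} {A B : Matrix (Fin m) (Fin n) ℝ}
    (h : ∀ i j, |A i j| ≤ |B i j|) : frobNorm A ≤ frobNorm B :=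
  Real.sqrt_le_sqrt <| Finset.sum_le_sum fun i _ =>
    Finset.sum_le_sum fun j _ => sq_le_sq.mpr (h i j)

lemma frobNorm_smul {m n : ℕ} (c : ℝ) (A : Matrix (Fin m) (Fin n) ℝ) :
    frobNorm (c • A) = |c| * frobNorm A := by
  simp only [frobNorm, Matrix.smul_apply, smul_eq_mul, mul_pow, ← Finset.mul_sum]
  rw [Real.sqrt_mul (sq_nonneg c), Real.sqrt_sq_eq_abs]

lemma frobNorm_nonneg {m n : ℕ} (A : Matrix (Fin m) (Fin n) ℝ) : 0 ≤ frobNorm A :=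
  Real.sqrt_nonneg _

lemma frobNorm_sq {m n : ℕ} (A : Matrix (Fin m) (Fin n) ℝ) :
    frobNorm A ^ 2 = ∑ j, vecNorm (fun i => A i j) ^ 2 := by
  rw [frobNorm, Real.sq_sqrt (by positivity), Finset.sum_comm]
  simp only [vecNorm, Real.sq_sqrt (Finset.sum_nonneg fun _ _ => sq_nonneg _)]

lemma frobNorm_mul_le {m n k : ℕ} (A : Matrix (Fin m) (Fin n) ℝ) (B : Matrix (Fin n) (Fin k) ℝ) :
    frobNorm (A * B) ≤ specNorm A * frobNorm B := by
  have hA : 0 ≤ specNorm A := norm_nonneg _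
  refine (sq_le_sq₀ (frobNorm_nonneg _) (mul_nonneg hA (frobNorm_nonneg _))).mp ?_
  rw [mul_pow, frobNorm_sq, frobNorm_sq, Finset.mul_sum]
  refine Finset.sum_le_sum fun j _ => ?_
  rw [← mul_pow]
  exact pow_le_pow_left₀ (Real.sqrt_nonneg _) (vecNorm_mulVec_le A fun i => B i j) 2

lemma specNorm_mul_le {m n k : ℕ} (A : Matrix (Fin m) (Fin n) ℝ) (B : Matrix (Fin n) (Fin k) ℝ) :
    specNorm (A * B) ≤ specNorm A * specNorm B :=
  Matrix.l2_opNorm_mul A B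

lemma specNorm_transpose_le_one {m n : ℕ} {B : Matrix (Fin m) (Fin n) ℝ} (hB : Bᵀ * B = 1) :
    specNorm Bᵀ ≤ 1 := by
  have h := B.l2_opNorm_conjTranspose_mul_self
  rw [Matrix.conjTranspose_eq_transpose_of_trivial, hB, ← Matrix.diagonal_one,
    Matrix.l2_opNorm_diagonal] at h
  rw [specNorm_eq_l2_opNorm, ← Matrix.conjTranspose_eq_transpose_of_trivial,
    Matrix.l2_opNorm_conjTranspose]
  have h1 : ‖fun _ : Fin n => (1 : ℝ)‖ ≤ 1 :=
    (pi_norm_le_iff_of_nonneg zero_le_one).mpr fun _ => by simp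
  nlinarith [norm_nonneg B]

lemma vecNorm_mulVec_of_transpose_mul_self {m n : ℕ} {B : Matrix (Fin m) (Fin n) ℝ}
    (hB : Bᵀ * B = 1) (x : Fin n → ℝ) : vecNorm (B *ᵥ x) = vecNorm x := by
  have h : (B *ᵥ x) ⬝ᵥ (B *ᵥ x) = x ⬝ᵥ x := by
    rw [Matrix.dotProduct_mulVec, ← Matrix.vecMul_transpose, Matrix.vecMul_vecMul, hB,
      Matrix.vecMul_one]
  simp only [dotProduct, ← sq] at h
  rw [vecNorm, vecNorm, h]

lemma mul_vecNorm_le_vecNorm_diagonal_mulVec {m : ℕ} {μ c : Fin m → ℝ} {a : ℝ} (ha : 0 ≤ a)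
    (h : ∀ i, c i ≠ 0 → a ≤ |μ i|) : a * vecNorm c ≤ vecNorm (diagonal μ *ᵥ c) := by
  rw [← abs_of_nonneg ha, ← vecNorm_smul]
  refine vecNorm_le_of_abs_le fun i => ?_
  rw [Matrix.mulVec_diagonal, Pi.smul_apply, smul_eq_mul, abs_mul, abs_mul, abs_of_nonneg ha]
  rcases eq_or_ne (c i) 0 with hc | hc
  · simp [hc]
  · exact mul_le_mul_of_nonneg_right (h i hc) (abs_nonneg _)

lemma vecNorm_diagonal_mulVec_le {m : ℕ} {μ c : Fin m → ℝ} {a : ℝ} (ha : 0 ≤ a)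
    (h : ∀ i, c i ≠ 0 → |μ i| ≤ a) : vecNorm (diagonal μ *ᵥ c) ≤ a * vecNorm c := by
  rw [← abs_of_nonneg ha, ← vecNorm_smul]
  refine vecNorm_le_of_abs_le fun i => ?_
  rw [Matrix.mulVec_diagonal, Pi.smul_apply, smul_eq_mul, abs_mul, abs_mul, abs_of_nonneg ha]
  rcases eq_or_ne (c i) 0 with hc | hc
  · simp [hc]
  · exact mul_le_mul_of_nonneg_right (h i hc) (abs_nonneg _)

lemma mul_eq_mul_diagonal_of_eq {d : ℕ} {Z U : Matrix (Fin d) (Fin d) ℝ} {lam : Fin d → ℝ}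
    (hU : Uᵀ * U = 1) (hZ : Z = U * diagonal lam * Uᵀ) :
    Z * U = U * diagonal lam := by
  rw [hZ, Matrix.mul_assoc, hU, Matrix.mul_one]

lemma transpose_eq_of_eq_mul_diagonal_mul {d : ℕ} {Z U : Matrix (Fin d) (Fin d) ℝ}
    {lam : Fin d → ℝ} (hZ : Z = U * diagonal lam * Uᵀ) : Zᵀ = Z := by
  simp [hZ, Matrix.transpose_mul, Matrix.mul_assoc]

lemma mul_submatrix_eq_submatrix_mul_diagonal {d c : ℕ} {Z U : Matrix (Fin d) (Fin d) ℝ}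
    {lam : Fin d → ℝ} (hZU : Z * U = U * diagonal lam) (e : Fin c → Fin d) :
    Z * U.submatrix id e = U.submatrix id e * diagonal (lam ∘ e) := by
  ext i j
  have h := congrFun (congrFun hZU i) (e j)
  rw [Matrix.mul_diagonal] at h ⊢
  simpa [Matrix.mul_apply] using h

lemma submatrix_transpose_mul_submatrix {d c : ℕ} {U : Matrix (Fin d) (Fin d) ℝ}
    (hU : Uᵀ * U = 1) {e : Fin c → Fin d} (he : Function.Injective e) :
    (U.submatrix id e)ᵀ * U.submatrix id e = 1 := by
  rw [Matrix.transpose_submatrix, ← Matrix.submatrix_mul _ _ _ _ _ Function.bijective_id, hU,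
    Matrix.submatrix_one _ he]

lemma vecNorm_mulVec_mulVec_of_mul_eq {m n : ℕ} {Z : Matrix (Fin m) (Fin m) ℝ}
    {B : Matrix (Fin m) (Fin n) ℝ} {μ : Fin n → ℝ} (hB : Bᵀ * B = 1)
    (hZB : Z * B = B * diagonal μ) (c : Fin n → ℝ) :
    vecNorm (Z *ᵥ (B *ᵥ c)) = vecNorm (diagonal μ *ᵥ c) := by
  rw [Matrix.mulVec_mulVec, hZB, ← Matrix.mulVec_mulVec, vecNorm_mulVec_of_transpose_mul_self hB]

lemma exists_ne_zero_mulVec_eq_zero {m n : ℕ} (M : Matrix (Fin m) (Fin n) ℝ) (h : m < n) :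
    ∃ c ≠ 0, M *ᵥ c = 0 := by
  have hker := M.mulVecLin.ker_ne_bot_of_finrank_lt (by simpa using h)
  obtain ⟨c, hc, hc0⟩ := (Submodule.ne_bot_iff _).mp hker
  exact ⟨c, hc0, hc⟩

lemma abs_le_abs_add_specNorm_sub {d : ℕ} {Z₁ Z₂ U₁ U₂ : Matrix (Fin d) (Fin d) ℝ}
    {lam₁ lam₂ : Fin d → ℝ} (hU₁ : U₁ᵀ * U₁ = 1) (hU₂ : U₂ᵀ * U₂ = 1)
    (hZU₁ : Z₁ * U₁ = U₁ * diagonal lam₁) (hZU₂ : Z₂ * U₂ = U₂ * diagonal lam₂)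
    (hsort₁ : Antitone fun i => |lam₁ i|) (hsort₂ : Antitone fun i => |lam₂ i|) (k : Fin d) :
    |lam₂ k| ≤ |lam₁ k| + specNorm (Z₁ - Z₂) := by
  set e : Fin (k + 1) → Fin d := Fin.castLE k.isLt
  set B := U₂.submatrix id e
  have hB : Bᵀ * B = 1 := submatrix_transpose_mul_submatrix hU₂ (Fin.castLE_injective _)
  -- `B` spans the top `k + 1` eigenvectors of `Z₂`; pick `v ∈ range B` orthogonal to the top `k`
  -- eigenvectors of `Z₁`
  obtain ⟨c, hc0, hc⟩ := exists_ne_zero_mulVec_eq_zero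
    ((U₁ᵀ * B).submatrix (Fin.castLE k.isLt.le) id) k.val.lt_succ_self
  set v := B *ᵥ c
  set u := U₁ᵀ *ᵥ v
  have hu : ∀ i, u i ≠ 0 → k ≤ i := by
    intro i hi
    by_contra! hlt
    rw [show u = (U₁ᵀ * B) *ᵥ c from Matrix.mulVec_mulVec _ _ _] at hi
    exact hi (congrFun hc ⟨i, hlt⟩)
  have hU₁' : U₁ * U₁ᵀ = 1 := mul_eq_one_comm.mp hU₁
  have hUu : U₁ *ᵥ u = v := by rw [Matrix.mulVec_mulVec, hU₁', Matrix.one_mulVec]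
  have hvc : vecNorm v = vecNorm c := vecNorm_mulVec_of_transpose_mul_self hB c
  have hvu : vecNorm v = vecNorm u := by
    rw [← hUu, vecNorm_mulVec_of_transpose_mul_self hU₁]
  have hlow : |lam₂ k| * vecNorm v ≤ vecNorm (Z₂ *ᵥ v) := by
    rw [hvc, vecNorm_mulVec_mulVec_of_mul_eq hB (mul_submatrix_eq_submatrix_mul_diagonal hZU₂ e)]
    exact mul_vecNorm_le_vecNorm_diagonal_mulVec (abs_nonneg _) fun j _ =>
      hsort₂ (Fin.le_iff_val_le_val.mpr (Nat.lt_succ_iff.mp j.isLt))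
  have hup : vecNorm (Z₁ *ᵥ v) ≤ |lam₁ k| * vecNorm v := by
    rw [hvu, ← hUu, vecNorm_mulVec_mulVec_of_mul_eq hU₁ hZU₁]
    exact vecNorm_diagonal_mulVec_le (abs_nonneg _) fun i hi => hsort₁ (hu i hi)
  have htri : vecNorm (Z₂ *ᵥ v) ≤ vecNorm (Z₁ *ᵥ v) + specNorm (Z₁ - Z₂) * vecNorm v := by
    rw [show Z₂ *ᵥ v = Z₁ *ᵥ v - (Z₁ - Z₂) *ᵥ v by rw [Matrix.sub_mulVec, sub_sub_cancel]]
    exact (vecNorm_sub_le _ _).trans (add_le_add_right (vecNorm_mulVec_le _ _) _)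
  have hv : 0 < vecNorm v := hvc ▸ vecNorm_pos hc0
  exact le_of_mul_le_mul_right (by linarith) hv

lemma sylvester_eq_of_mul_eq_mul_diagonal {m n p : ℕ} {Z₁ Z₂ : Matrix (Fin m) (Fin m) ℝ}
    {A : Matrix (Fin m) (Fin n) ℝ} {B : Matrix (Fin m) (Fin p) ℝ} {ν : Fin n → ℝ}
    {μ : Fin p → ℝ} (hA : Z₁ * A = A * diagonal ν) (hB : Z₂ * B = B * diagonal μ)
    (hZ₂ : Z₂ᵀ = Z₂) :
    Bᵀ * A * diagonal ν - diagonal μ * (Bᵀ * A) = Bᵀ * ((Z₁ - Z₂) * A) := by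
  have hB' : Bᵀ * Z₂ = diagonal μ * Bᵀ := by
    simpa [Matrix.transpose_mul, hZ₂] using congrArg Matrix.transpose hB
  rw [Matrix.sub_mul, Matrix.mul_sub, hA, ← Matrix.mul_assoc Bᵀ Z₂, hB',
    Matrix.mul_assoc (diagonal μ), Matrix.mul_assoc]

lemma mul_specNorm_le_specNorm_mul_diagonal_sub_diagonal_mul {p q : ℕ}
    (X : Matrix (Fin p) (Fin q) ℝ) {μ : Fin p → ℝ} {ν : Fin q → ℝ} {a b : ℝ} (ha : 0 ≤ a)
    (hab : a < b) (hμ : ∀ i, |μ i| ≤ a) (hν : ∀ j, b ≤ |ν j|) :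
    (b - a) * specNorm X ≤ specNorm (X * diagonal ν - diagonal μ * X) := by
  set R := X * diagonal ν - diagonal μ * X
  have hb : 0 < b := ha.trans_lt hab
  have hX : X = (diagonal μ * X + R) * diagonal ν⁻¹ := by
    have hν0 : ∀ j, ν j ≠ 0 := fun j => abs_pos.mp (hb.trans_le (hν j))
    rw [show diagonal μ * X + R = X * diagonal ν from add_sub_cancel _ _, Matrix.mul_assoc,
      diagonal_mul_diagonal]
    simp [hν0]
  have hμn : ‖diagonal μ‖ ≤ a := by
    rw [Matrix.l2_opNorm_diagonal]
    exact (pi_norm_le_iff_of_nonneg ha).mpr hμ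
  have hνn : ‖diagonal ν⁻¹‖ ≤ b⁻¹ := by
    rw [Matrix.l2_opNorm_diagonal]
    refine (pi_norm_le_iff_of_nonneg (inv_nonneg.mpr hb.le)).mpr fun j => ?_
    rw [Pi.inv_apply, norm_inv, Real.norm_eq_abs]
    exact inv_anti₀ hb (hν j)
  have h : ‖X‖ ≤ (a * ‖X‖ + ‖R‖) * b⁻¹ := calc
    ‖X‖ = ‖(diagonal μ * X + R) * diagonal ν⁻¹‖ := congrArg _ hX
    _ ≤ (‖diagonal μ‖ * ‖X‖ + ‖R‖) * ‖diagonal ν⁻¹‖ := by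
      grw [Matrix.l2_opNorm_mul, norm_add_le, Matrix.l2_opNorm_mul]
    _ ≤ (a * ‖X‖ + ‖R‖) * b⁻¹ := by gcongr
  rw [← div_eq_mul_inv, le_div_iff₀ hb] at h
  simp only [specNorm_eq_l2_opNorm]
  linarith

lemma mul_frobNorm_le_frobNorm_mul_diagonal_sub_diagonal_mul {p q : ℕ}
    (X : Matrix (Fin p) (Fin q) ℝ) {μ : Fin p → ℝ} {ν : Fin q → ℝ} {a b : ℝ}
    (hab : a ≤ b) (hμ : ∀ i, |μ i| ≤ a) (hν : ∀ j, b ≤ |ν j|) :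
    (b - a) * frobNorm X ≤ frobNorm (X * diagonal ν - diagonal μ * X) := by
  rw [← abs_of_nonneg (sub_nonneg.mpr hab), ← frobNorm_smul]
  refine frobNorm_le_of_abs_le fun i j => ?_
  have hgap : |b - a| ≤ |ν j - μ i| := by
    rw [abs_of_nonneg (sub_nonneg.mpr hab)]
    linarith [hμ i, hν j, abs_sub_abs_le_abs_sub (ν j) (μ i)]
  rw [Matrix.smul_apply, Matrix.sub_apply, Matrix.mul_diagonal, Matrix.diagonal_mul,
    smul_eq_mul, show X i j * ν j - μ i * X i j = X i j * (ν j - μ i) by ring, abs_mul, abs_mul,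
    mul_comm]
  exact mul_le_mul_of_nonneg_left hgap (abs_nonneg _)

lemma mul_norm_transpose_mul_le_of_spectral_gap {m n p : ℕ} {Z₁ Z₂ : Matrix (Fin m) (Fin m) ℝ}
    {A : Matrix (Fin m) (Fin n) ℝ} {B : Matrix (Fin m) (Fin p) ℝ} {ν : Fin n → ℝ}
    {μ : Fin p → ℝ} {a b : ℝ} (hA : Z₁ * A = A * diagonal ν) (hB : Z₂ * B = B * diagonal μ)
    (hBB : Bᵀ * B = 1) (hZ₂ : Z₂ᵀ = Z₂) (ha : 0 ≤ a) (hab : a < b) (hμ : ∀ i, |μ i| ≤ a)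
    (hν : ∀ j, b ≤ |ν j|) :
    (b - a) * specNorm (Bᵀ * A) ≤ specNorm ((Z₁ - Z₂) * A) ∧
      (b - a) * frobNorm (Bᵀ * A) ≤ frobNorm ((Z₁ - Z₂) * A) := by
  have hR := sylvester_eq_of_mul_eq_mul_diagonal hA hB hZ₂
  have hBn := specNorm_transpose_le_one hBB
  constructor
  · calc _ ≤ _ := mul_specNorm_le_specNorm_mul_diagonal_sub_diagonal_mul _ ha hab hμ hν
      _ = _ := by rw [hR]
      _ ≤ _ := specNorm_mul_le _ _
      _ ≤ _ := mul_le_of_le_one_left (norm_nonneg _) hBn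
  · calc _ ≤ _ := mul_frobNorm_le_frobNorm_mul_diagonal_sub_diagonal_mul _ hab.le hμ hν
      _ = _ := by rw [hR]
      _ ≤ _ := frobNorm_mul_le _ _
      _ ≤ _ := mul_le_of_le_one_left (frobNorm_nonneg _) hBn

lemma sub_le_sqrt_two_mul_sub {a b t ε : ℝ} (hweyl : a ≤ t + ε)
    (hε : ε ≤ (1 - 1 / √2) * (b - t)) : b - t ≤ √2 * (b - a) := by
  calc b - t = √2 * (1 / √2) * (b - t) := by rw [mul_one_div_cancel (by positivity), one_mul]
    _ = √2 * ((b - t) - (1 - 1 / √2) * (b - t)) := by ring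
    _ ≤ √2 * (b - a) := mul_le_mul_of_nonneg_left (by linarith) (Real.sqrt_nonneg 2)

lemma le_mul_div_of_le_mul_of_mul_le {x y s g δ : ℝ} (hδ : 0 < δ) (hs : 0 ≤ s) (hx : 0 ≤ x)
    (hg : δ ≤ s * g) (hxy : g * x ≤ y) : x ≤ s * y / δ := by
  rw [le_div_iff₀ hδ]
  nlinarith [mul_le_mul_of_nonneg_left hg hx, mul_le_mul_of_nonneg_left hxy hs]

theorem statement13 {d r : ℕ} (hrd : r < d)
    (Z₁ Z₂ U₁ U₂ : Matrix (Fin d) (Fin d) ℝ) (lam₁ lam₂ : Fin d → ℝ)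
    (hU₁ : U₁ᵀ * U₁ = 1) (hU₂ : U₂ᵀ * U₂ = 1)
    (hZ₁ : Z₁ = U₁ * Matrix.diagonal lam₁ * U₁ᵀ)
    (hZ₂ : Z₂ = U₂ * Matrix.diagonal lam₂ * U₂ᵀ)
    (hsort₁ : ∀ i j : Fin d, i ≤ j → |lam₁ j| ≤ |lam₁ i|)
    (hsort₂ : ∀ i j : Fin d, i ≤ j → |lam₂ j| ≤ |lam₂ i|)
    (hgap : |lam₁ ⟨r, hrd⟩| < |lam₁ ⟨r - 1, by omega⟩|)
    (hclose : specNorm (Z₁ - Z₂)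
      ≤ (1 - 1 / Real.sqrt 2) * (|lam₁ ⟨r - 1, by omega⟩| - |lam₁ ⟨r, hrd⟩|)) :
    specNorm ((lastCols r U₂)ᵀ * firstCols r hrd.le U₁)
        ≤ Real.sqrt 2 * specNorm ((Z₁ - Z₂) * firstCols r hrd.le U₁)
            / (|lam₁ ⟨r - 1, by omega⟩| - |lam₁ ⟨r, hrd⟩|) ∧
      frobNorm ((lastCols r U₂)ᵀ * firstCols r hrd.le U₁)
        ≤ Real.sqrt 2 * frobNorm ((Z₁ - Z₂) * firstCols r hrd.le U₁)
            / (|lam₁ ⟨r - 1, by omega⟩| - |lam₁ ⟨r, hrd⟩|) := by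
  have hZU₁ := mul_eq_mul_diagonal_of_eq hU₁ hZ₁
  have hZU₂ := mul_eq_mul_diagonal_of_eq hU₂ hZ₂
  have hweyl := abs_le_abs_add_specNorm_sub hU₁ hU₂ hZU₁ hZU₂ (fun i j h => hsort₁ i j h)
    (fun i j h => hsort₂ i j h) ⟨r, hrd⟩
  have hgap₂ := sub_le_sqrt_two_mul_sub hweyl hclose
  have hδ : 0 < |lam₁ ⟨r - 1, by omega⟩| - |lam₁ ⟨r, hrd⟩| := sub_pos.mpr hgap
  have hab : |lam₂ ⟨r, hrd⟩| < |lam₁ ⟨r - 1, by omega⟩| := by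
    by_contra! h
    nlinarith [Real.sqrt_nonneg 2]
  set e : Fin (d - r) → Fin d := fun j => ⟨r + j, by omega⟩
  have hB : (lastCols r U₂)ᵀ * lastCols r U₂ = 1 :=
    submatrix_transpose_mul_submatrix hU₂ (e := e) fun i j h => by simpa [e, Fin.ext_iff] using h
  have hμ : ∀ i, |(lam₂ ∘ e) i| ≤ |lam₂ ⟨r, hrd⟩| := fun i =>
    hsort₂ _ _ (Fin.mk_le_mk.mpr (Nat.le_add_right r i))
  have hν : ∀ j, |lam₁ ⟨r - 1, by omega⟩| ≤ |(lam₁ ∘ Fin.castLE hrd.le) j| := fun j =>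
    hsort₁ _ _ (Fin.mk_le_mk.mpr (by omega))
  obtain ⟨hspec, hfrob⟩ := mul_norm_transpose_mul_le_of_spectral_gap
    (mul_submatrix_eq_submatrix_mul_diagonal hZU₁ (Fin.castLE hrd.le))
    (mul_submatrix_eq_submatrix_mul_diagonal hZU₂ e) hB (transpose_eq_of_eq_mul_diagonal_mul hZ₂)
    (abs_nonneg _) hab hμ hν
  exact ⟨le_mul_div_of_le_mul_of_mul_le hδ (Real.sqrt_nonneg 2) (norm_nonneg _) hgap₂ hspec,
    le_mul_div_of_le_mul_of_mul_le hδ (Real.sqrt_nonneg 2) (frobNorm_nonneg _) hgap₂ hfrob⟩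
end
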